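/- arXiv:2104.07359 — 2 statements merged into one kernel-verified Lean document; each statement's English description precedes it below -/
import Mathlib

section
/- Fix a ≠ 0, b ∈ ℝ, and θ ∈ ℝ, and define M(y) := (a²/(a² + (y−b)²))^{1/2} for y ∈ ℝ. Then sup_{y∈ℝ} (y − θ)² · M(y)² ≤ a² + (θ − b)². -/
/-! With `u = y - b` and `v = θ - b`, the bound is Cauchy–Schwarz for the vectors `(a, -v)` and
`(u, a)`, whose inner product is `a (y - θ)`. -/

theorem sq_mul_sub_le_mul {R : Type*} [CommRing R] [LinearOrder R] [IsStrictOrderedRing R]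
    (a u v : R) : (a * (u - v)) ^ 2 ≤ (a ^ 2 + v ^ 2) * (a ^ 2 + u ^ 2) := by
  have lagrange : (a ^ 2 + v ^ 2) * (a ^ 2 + u ^ 2) = (a * (u - v)) ^ 2 + (a ^ 2 + u * v) ^ 2 := by
    ring
  rw [lagrange]
  exact le_add_of_nonneg_right (sq_nonneg _)

theorem weighting_function_bound_general
    (a b θ : ℝ) :
    ∀ y : ℝ,
      (y - θ) ^ 2 * (Real.sqrt (a ^ 2 / (a ^ 2 + (y - b) ^ 2))) ^ 2
        ≤ a ^ 2 + (θ - b) ^ 2 := by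
  intro y
  rw [Real.sq_sqrt (by positivity), ← mul_div_assoc]
  refine div_le_of_le_mul₀ (by positivity) (by positivity) ?_
  calc (y - θ) ^ 2 * a ^ 2 = (a * ((y - b) - (θ - b))) ^ 2 := by ring
    _ ≤ (a ^ 2 + (θ - b) ^ 2) * (a ^ 2 + (y - b) ^ 2) := sq_mul_sub_le_mul a _ _

/-- The weighting function `M(y) = (a²/(a²+(y−b)²))^{1/2}` satisfies
`(y−θ)²·M(y)² ≤ a² + (θ−b)²` for all `y`, establishing the bias-robustness
precondition for the normal location model. -/
theorem weighting_function_bound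
    (a b θ : ℝ) (ha : a ≠ 0) :
    ∀ y : ℝ,
      (y - θ) ^ 2 * (Real.sqrt (a ^ 2 / (a ^ 2 + (y - b) ^ 2))) ^ 2
        ≤ a ^ 2 + (θ - b) ^ 2 :=
  weighting_function_bound_general a b θ
end

section
/- Let q : ℝ → ℝ be a smooth, everywhere positive probability density and let h : ℝ → ℝ be continuously differentiable with the property that q(x)·h(x) → 0 as x → ±∞, and assume x ↦ (log q)'(x)·h(x) + h'(x) is integrable with respect to q. Then ∫_ℝ [ (log q)'(x)·h(x) + h'(x) ] q(x) dx = 0. -/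
open Filter MeasureTheory

/-- One-dimensional Stein identity for the Langevin Stein operator: if `q` is
a smooth positive probability density, `h` is continuously differentiable,
`q·h` vanishes at ±∞, and the Stein-transformed function is `q`-integrable,
then `∫ ((log q)'·h + h')·q = 0`. -/
theorem stein_identity_one_dim
    (q h : ℝ → ℝ)
    (hq : ContDiff ℝ (⊤ : ℕ∞) q) (hqpos : ∀ x, 0 < q x)
    (hqdens : ∫ x : ℝ, q x = 1)
    (hh : ContDiff ℝ 1 h)
    (hlim_top : Tendsto (fun x => q x * h x) atTop (nhds 0))
    (hlim_bot : Tendsto (fun x => q x * h x) atBot (nhds 0))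
    (hint : Integrable (fun x =>
      (deriv (fun z => Real.log (q z)) x * h x + deriv h x) * q x)) :
    ∫ x : ℝ, (deriv (fun z => Real.log (q z)) x * h x + deriv h x) * q x = 0 := by
  have hqd : ∀ x, HasDerivAt q (deriv q x) x :=
    fun x => (hq.differentiable (by simp) x).hasDerivAt
  have hhd : ∀ x, HasDerivAt h (deriv h x) x :=
    fun x => (hh.differentiable (by simp) x).hasDerivAt
  have key : ∀ x, (deriv (fun z => Real.log (q z)) x * h x + deriv h x) * q x
      = deriv q x * h x + q x * deriv h x := by
    intro x
    have hlog : deriv (fun z => Real.log (q z)) x = deriv q x / q x :=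
      ((hqd x).log (hqpos x).ne').deriv
    rw [hlog]
    rw [add_mul, mul_right_comm, div_mul_cancel₀ _ (hqpos x).ne', mul_comm (deriv h x)]
  have hderiv : ∀ x, HasDerivAt (fun x => q x * h x)
      (deriv q x * h x + q x * deriv h x) x := fun x => (hqd x).mul (hhd x)
  have hint' : Integrable (fun x => deriv q x * h x + q x * deriv h x) := by
    exact hint.congr (Filter.Eventually.of_forall (fun x => (key x)))
  calc ∫ x : ℝ, (deriv (fun z => Real.log (q z)) x * h x + deriv h x) * q x
      = ∫ x : ℝ, deriv q x * h x + q x * deriv h x := by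
        exact integral_congr_ae (Filter.Eventually.of_forall key)
    _ = 0 - 0 := integral_of_hasDerivAt_of_tendsto hderiv hint' hlim_bot hlim_top
    _ = 0 := by ring
end
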